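/- Let Ω be a nonempty compact subset of ℝ^n (n ≥ 2) and δ > 0. Then the minimal unfolded region of the δ-parallel body Ω_δ is included in that of Ω: Uf(Ω_δ) ⊆ Uf(Ω). -/
import Mathlib


open scoped RealInnerProductSpace

/-- Reflection in the hyperplane `{x : x·v = b}` (for a unit vector `v`). -/
noncomputable def reflHyp {n : ℕ} (v : EuclideanSpace ℝ (Fin n)) (b : ℝ)
    (x : EuclideanSpace ℝ (Fin n)) : EuclideanSpace ℝ (Fin n) :=
  x - (2 * (⟪x, v⟫ - b)) • v

/-- The open cap of `X` above the hyperplane `{x : x·v = b}`. -/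
def cap {n : ℕ} (X : Set (EuclideanSpace ℝ (Fin n))) (v : EuclideanSpace ℝ (Fin n)) (b : ℝ) :
    Set (EuclideanSpace ℝ (Fin n)) :=
  X ∩ {x | b < ⟪x, v⟫}

/-- The level of the maximal cap of `X` in direction `v`. -/
noncomputable def level {n : ℕ} (X : Set (EuclideanSpace ℝ (Fin n)))
    (v : EuclideanSpace ℝ (Fin n)) : ℝ :=
  sInf {a : ℝ | ∀ b : ℝ, a ≤ b → reflHyp v b '' cap X v b ⊆ X}

/-- The minimal unfolded region (heart) of `X`. -/
noncomputable def Uf {n : ℕ} (X : Set (EuclideanSpace ℝ (Fin n))) :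
    Set (EuclideanSpace ℝ (Fin n)) :=
  ⋂ v ∈ {v : EuclideanSpace ℝ (Fin n) | ‖v‖ = 1}, {x | ⟪x, v⟫ ≤ level X v}

/-- The δ-parallel body of `Ω`: the union of closed δ-balls centered in `Ω`. -/
def parallelBody {n : ℕ} (Ω : Set (EuclideanSpace ℝ (Fin n))) (δ : ℝ) :
    Set (EuclideanSpace ℝ (Fin n)) :=
  ⋃ x ∈ Ω, Metric.closedBall x δ

lemma normsq_aux {n : ℕ} (w v : EuclideanSpace ℝ (Fin n)) (hv : ‖v‖ = 1) (c : ℝ) :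
    ‖w - c • v‖ ^ 2 = ‖w‖ ^ 2 - 2 * c * ⟪w, v⟫ + c ^ 2 := by
  rw [norm_sub_sq_real, real_inner_smul_right, norm_smul, hv, mul_one, Real.norm_eq_abs,
    sq_abs]
  ring

lemma inner_reflHyp {n : ℕ} (v : EuclideanSpace ℝ (Fin n)) (hv : ‖v‖ = 1) (b : ℝ)
    (x : EuclideanSpace ℝ (Fin n)) : ⟪reflHyp v b x, v⟫ = 2 * b - ⟪x, v⟫ := by
  have hvv : ⟪v, v⟫ = (1 : ℝ) := by
    rw [real_inner_self_eq_norm_sq, hv]; norm_num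
  unfold reflHyp
  rw [inner_sub_left, real_inner_smul_left, hvv]
  ring

theorem stmt17 {n : ℕ} (hn : 2 ≤ n) (Ω : Set (EuclideanSpace ℝ (Fin n)))
    (hΩne : Ω.Nonempty) (hΩ : IsCompact Ω) (δ : ℝ) (hδ : 0 < δ) :
    Uf (parallelBody Ω δ) ⊆ Uf Ω := by
  -- a bound for Ω
  obtain ⟨R, hR⟩ := hΩ.isBounded.subset_closedBall 0
  have hRnn : 0 ≤ R := by
    obtain ⟨x0, hx0⟩ := hΩne
    have := hR hx0
    simp only [Metric.mem_closedBall, dist_zero_right] at this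
    exact le_trans (norm_nonneg _) this
  have hnormΩ : ∀ x ∈ Ω, ‖x‖ ≤ R := by
    intro x hx
    have := hR hx
    simpa [dist_zero_right] using this
  have hnormP : ∀ y ∈ parallelBody Ω δ, ‖y‖ ≤ R + δ := by
    intro y hy
    simp only [parallelBody, Set.mem_iUnion, Metric.mem_closedBall] at hy
    obtain ⟨x, hx, hdx⟩ := hy
    have hxy : x + (y - x) = y := by abel
    calc ‖y‖ = ‖x + (y - x)‖ := by rw [hxy]
    _ ≤ ‖x‖ + ‖y - x‖ := norm_add_le _ _
    _ ≤ R + δ := add_le_add (hnormΩ x hx) (by rwa [← dist_eq_norm])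
  intro x hx
  simp only [Uf, Set.mem_iInter, Set.mem_setOf_eq] at hx ⊢
  intro v hv
  refine le_trans (hx v hv) ?_
  -- level (parallelBody Ω δ) v ≤ level Ω v
  have hinnerΩ : ∀ x ∈ Ω, ⟪x, v⟫ ≤ R := fun x hxΩ =>
    le_trans (real_inner_le_norm x v) (by rw [hv, mul_one]; exact hnormΩ x hxΩ)
  have hinnerP : ∀ y ∈ parallelBody Ω δ, |⟪y, v⟫| ≤ R + δ := fun y hy =>
    le_trans (abs_real_inner_le_norm y v) (by rw [hv, mul_one]; exact hnormP y hy)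
  unfold level
  apply csInf_le_csInf
  · -- BddBelow for parallelBody's set
    refine ⟨-(R + δ), fun a ha => ?_⟩
    by_contra hlt
    push_neg at hlt
    obtain ⟨x0, hx0⟩ := hΩne
    have hx0P : x0 ∈ parallelBody Ω δ := by
      simp only [parallelBody, Set.mem_iUnion, Metric.mem_closedBall]
      exact ⟨x0, hx0, by simp [hδ.le]⟩
    have hcap : x0 ∈ cap (parallelBody Ω δ) v a := by
      refine ⟨hx0P, ?_⟩
      have := (abs_le.mp (hinnerP x0 hx0P)).1
      exact lt_of_lt_of_le hlt this
    have hmem : reflHyp v a x0 ∈ parallelBody Ω δ :=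
      ha a le_rfl ⟨x0, hcap, rfl⟩
    have h1 := (abs_le.mp (hinnerP _ hmem)).1
    rw [inner_reflHyp v hv] at h1
    have h3 := (abs_le.mp (hinnerP x0 hx0P)).1
    linarith
  · -- Ω's set is nonempty
    refine ⟨R, fun b hb => ?_⟩
    have : cap Ω v b = ∅ := by
      ext z
      simp only [cap, Set.mem_inter_iff, Set.mem_setOf_eq, Set.mem_empty_iff_false,
        iff_false, not_and, not_lt]
      intro hz
      exact le_trans (hinnerΩ z hz) hb
    simp [this]
  · -- inclusion of the index sets
    intro a ha b hb
    rintro _ ⟨y, ⟨hyP, hyb⟩, rfl⟩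
    simp only [Set.mem_setOf_eq] at hyb
    simp only [parallelBody, Set.mem_iUnion, Metric.mem_closedBall] at hyP
    obtain ⟨z, hzΩ, hdz⟩ := hyP
    have hdz' : ‖y - z‖ ≤ δ := by rwa [← dist_eq_norm]
    by_cases hzb : b < ⟪z, v⟫
    · -- z in the cap: reflect z too
      have hzref : reflHyp v b z ∈ Ω := ha b hb ⟨z, ⟨hzΩ, hzb⟩, rfl⟩
      have hdiff : reflHyp v b y - reflHyp v b z
          = (y - z) - ((2 * (⟪y, v⟫ - b)) - (2 * (⟪z, v⟫ - b))) • v := by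
        simp only [reflHyp, sub_smul]
        abel
      have hnormeq : ‖reflHyp v b y - reflHyp v b z‖ ^ 2 ≤ δ ^ 2 := by
        rw [hdiff, normsq_aux _ _ hv]
        have hwv : ⟪y - z, v⟫ = ⟪y, v⟫ - ⟪z, v⟫ := inner_sub_left _ _ _
        have hw2 : ‖y - z‖ ^ 2 ≤ δ ^ 2 := by
          have := sq_le_sq' (by linarith [norm_nonneg (y - z)]) hdz'
          simpa using this
        nlinarith [hw2]
      have : ‖reflHyp v b y - reflHyp v b z‖ ≤ δ := by
        have := Real.sqrt_le_sqrt hnormeq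
        rwa [Real.sqrt_sq (norm_nonneg _), Real.sqrt_sq hδ.le] at this
      simp only [parallelBody, Set.mem_iUnion, Metric.mem_closedBall]
      exact ⟨reflHyp v b z, hzref, by rwa [dist_eq_norm]⟩
    · -- z below the hyperplane: reflected point stays within δ of z
      push_neg at hzb
      have hdiff : reflHyp v b y - z = (y - z) - (2 * (⟪y, v⟫ - b)) • v := by
        simp only [reflHyp]
        abel
      have hnormeq : ‖reflHyp v b y - z‖ ^ 2 ≤ δ ^ 2 := by
        rw [hdiff, normsq_aux _ _ hv]
        have hwv : ⟪y - z, v⟫ = ⟪y, v⟫ - ⟪z, v⟫ := inner_sub_left _ _ _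
        have hw2 : ‖y - z‖ ^ 2 ≤ δ ^ 2 := by
          have := sq_le_sq' (by linarith [norm_nonneg (y - z)]) hdz'
          simpa using this
        nlinarith [hw2, hyb, hzb]
      have : ‖reflHyp v b y - z‖ ≤ δ := by
        have := Real.sqrt_le_sqrt hnormeq
        rwa [Real.sqrt_sq (norm_nonneg _), Real.sqrt_sq hδ.le] at this
      simp only [parallelBody, Set.mem_iUnion, Metric.mem_closedBall]
      exact ⟨z, hzΩ, by rwa [dist_eq_norm]⟩
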